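/- arXiv:1411.6262 — 3 statements merged into one kernel-verified Lean document; each statement's English description precedes it below -/
import Mathlib

section
/- Let σ be an S-function with constants a_1, a_2, b_1, b_2. Let l_n > 0, K ∈ ℝ^n, and P a symmetric positive definite n×n real matrix such that for every ρ ∈ [a_1/b_1, a_2/b_2] the matrix (J_n − ρ l_n e_n Kᵀ)ᵀ P + P (J_n − ρ l_n e_n Kᵀ) + Id_n is negative semidefinite. Define V_0(x) = (xᵀ P x)^{1/2}, and let A > 0 satisfy max_{V_0(x) ≤ A} |Kᵀx| ≤ min(1, b_1, b_2). Then there exist positive constants c_0 and l_0 such that for every x ∈ ℝ^n ∖ {0} with V_0(x) ≤ A and every d ∈ ℝ: ∇V_0(x)·(J_n x − l_n e_n σ(Kᵀx + d)) ≤ −(c_0/2) V_0(x) + 4 l_0 min(1, |d|). -/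
/-!
On `{V₀ ≤ A}` the feedback `Kᵀx` stays in the linear zone of `σ`, where `σ(Kᵀx) = ρ Kᵀx` for
some `ρ` in the sector `[a₁/b₁, a₂/b₂]`. The vector field is therefore
`(J_n - ρ l_n e_n Kᵀ) x - l_n Δ e_n` with `Δ = σ(Kᵀx + d) - σ(Kᵀx)`. The Lyapunov inequality for
this `ρ` bounds the contribution of the first term to `∇V₀` by `-|x|² / (2 V₀) ≤ -(c₀/2) V₀`,
where `c₀ xᵀPx ≤ |x|²`; Cauchy–Schwarz for the inner product defined by `P` bounds the second by
`l_n √(e_nᵀPe_n) |Δ|`, and `|Δ| ≤ M min(1, |d|)` because `σ` is Lipschitz on `[-2, 2]` and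
bounded by `a₂`.
-/

open MeasureTheory Filter Matrix

noncomputable section

/-- The signed power `⌊x⌉^a = |x|^a · sign x`. -/
def sgnPow (x a : ℝ) : ℝ := |x| ^ a * Real.sign x

/-- The exponents `p_i = 1 - (i-1)/n`. -/
def pe (n i : ℕ) : ℝ := 1 - ((i : ℝ) - 1) / n

/-- The exponents `β_0 = p_2`, `β_i = (n-1+i)/(n-i)`. -/
def be (n i : ℕ) : ℝ := if i = 0 then pe n 2 else ((n : ℝ) - 1 + i) / ((n : ℝ) - i)

/-- The exponent `α = 2(n-1)/(2n-1)`. -/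
def al (n : ℕ) : ℝ := 2 * ((n : ℝ) - 1) / (2 * (n : ℝ) - 1)

/-- The recursively defined virtual controls `v_i`; states are 1-indexed sequences
(the 0-th coordinate is unused). -/
def vfb (n : ℕ) (l : ℕ → ℝ) : ℕ → (ℕ → ℝ) → ℝ
  | 0, _ => 0
  | i + 1, x =>
    -l (i + 1) *
      sgnPow (sgnPow (x (i + 1)) (be n i) - sgnPow (vfb n l i x) (be n i))
        (pe n (i + 2) / (pe n (i + 1) * be n i))

/-- `ω_i(x_1,…,x_i) = ⌊x_i⌉^{β_{i-1}} - ⌊v_{i-1}⌉^{β_{i-1}}`. -/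
def omfb (n : ℕ) (l : ℕ → ℝ) (i : ℕ) (x : ℕ → ℝ) : ℝ :=
  sgnPow (x i) (be n (i - 1)) - sgnPow (vfb n l (i - 1) x) (be n (i - 1))

/-- `W_i`. -/
def Wfb (n : ℕ) (l : ℕ → ℝ) (i : ℕ) (x : ℕ → ℝ) : ℝ :=
  (|x i| ^ (be n (i - 1) + 1) - |vfb n l (i - 1) x| ^ (be n (i - 1) + 1)) / (be n (i - 1) + 1) -
    sgnPow (vfb n l (i - 1) x) (be n (i - 1)) * (x i - vfb n l (i - 1) x)

/-- Embedding of `ℝ^n` into 1-indexed sequences. -/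
def emb (n : ℕ) (x : Fin n → ℝ) (j : ℕ) : ℝ :=
  if h : 1 ≤ j ∧ j ≤ n then x ⟨j - 1, by omega⟩ else 0

/-- The Lyapunov function `V_n = Σ_{i=1}^n W_i` on `ℝ^n`. -/
def Vn (n : ℕ) (l : ℕ → ℝ) (x : Fin n → ℝ) : ℝ :=
  ∑ i ∈ Finset.Icc 1 n, Wfb n l i (emb n x)

/-- `ω_n` on `ℝ^n`. -/
def omn (n : ℕ) (l : ℕ → ℝ) (x : Fin n → ℝ) : ℝ := omfb n l n (emb n x)

/-- The `n`-th Jordan block: `(J_n)_{ij} = 1` if `i = j - 1` (1-indexed), else `0`. -/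
def Jmat (n : ℕ) : Matrix (Fin n) (Fin n) ℝ :=
  Matrix.of fun i j => if (i : ℕ) + 1 = (j : ℕ) then 1 else 0

/-- The `i`-th standard basis vector of `ℝ^n` (1-indexed: `eVec n n = e_n`). -/
def eVec (n i : ℕ) : Fin n → ℝ := fun j => if (j : ℕ) + 1 = i then 1 else 0

/-- The standard saturation function `s(x) = x / max(1,|x|)`. -/
def satur (x : ℝ) : ℝ := x / max 1 |x|

/-- `σ` is an S-function with sector constants `a₁ ≤ a₂`, `b₁, b₂`, limit `si = σ_{+∞}`
at `+∞` (and `-si` at `-∞`) and decay constant `Cs`. -/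
structure IsSFun (σ : ℝ → ℝ) (a₁ a₂ b₁ b₂ si Cs : ℝ) : Prop where
  lip : LocallyLipschitz σ
  ha₁ : 0 < a₁
  h₁₂ : a₁ ≤ a₂
  hb₁ : 0 < b₁
  hb₂ : 0 < b₂
  hq : a₁ / b₁ ≤ a₂ / b₂
  lower : ∀ x : ℝ, a₁ * x * satur (x / b₁) ≤ x * σ x
  upper : ∀ x : ℝ, x * σ x ≤ a₂ * x * satur (x / b₂)
  limTop : Filter.Tendsto σ Filter.atTop (nhds si)
  limBot : Filter.Tendsto σ Filter.atBot (nhds (-si))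
  hC : 0 < Cs
  hdecay : ∀ x : ℝ, |σ |x| - si| ≤ Cs / (1 + |x|)


open Topology

lemma abs_satur_le_one (x : ℝ) : |satur x| ≤ 1 := by
  rw [satur, abs_div, abs_of_pos (show (0 : ℝ) < max 1 |x| by positivity),
    div_le_one (by positivity)]
  exact le_max_right _ _

lemma satur_eq_self {x : ℝ} (hx : |x| ≤ 1) : satur x = x := by
  rw [satur, max_eq_left hx, div_one]

lemma mul_satur_div_nonneg {b : ℝ} (hb : 0 < b) (x : ℝ) : 0 ≤ x * satur (x / b) := by
  have h : x * satur (x / b) = x ^ 2 / (b * max 1 |x / b|) := by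
    rw [satur]; field_simp
  rw [h]; positivity

theorem LocallyLipschitz.exists_abs_sub_le_mul_min {f : ℝ → ℝ} (hf : LocallyLipschitz f) {B : ℝ}
    (hB : ∀ t, |f t| ≤ B) :
    ∃ M > 0, ∀ w d : ℝ, |w| ≤ 1 → |f (w + d) - f w| ≤ M * min 1 |d| := by
  obtain ⟨K, hK⟩ := hf.locallyLipschitzOn.exists_lipschitzOnWith_of_compact
    (isCompact_Icc (a := (-2 : ℝ)) (b := 2))
  have hB₀ : 0 ≤ B := (abs_nonneg _).trans (hB 0)
  refine ⟨K + 2 * B + 1, by positivity, fun w d hw => ?_⟩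
  rcases le_or_gt |d| 1 with hd₁ | hd₁
  · rw [min_eq_right hd₁]
    have hmem : ∀ t : ℝ, |t| ≤ 2 → t ∈ Set.Icc (-2) 2 := fun t ht => abs_le.mp ht
    calc |f (w + d) - f w| ≤ K * |w + d - w| := by
          simpa only [Real.dist_eq] using hK.dist_le_mul _
            (hmem _ ((abs_add_le w d).trans (by linarith))) _ (hmem _ (by linarith))
      _ ≤ (K + 2 * B + 1) * |d| := by
          rw [add_sub_cancel_left]; gcongr; linarith
  · rw [min_eq_left hd₁.le, mul_one]
    calc |f (w + d) - f w| ≤ |f (w + d)| + |f w| := abs_sub _ _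
      _ ≤ K + 2 * B + 1 := by linarith [hB (w + d), hB w, K.2]

namespace IsSFun

variable {σ : ℝ → ℝ} {a₁ a₂ b₁ b₂ si Cs : ℝ}

lemma sector_of_abs_le (hσ : IsSFun σ a₁ a₂ b₁ b₂ si Cs) {y : ℝ} (hy : |y| ≤ min b₁ b₂) :
    a₁ / b₁ * y ^ 2 ≤ y * σ y ∧ y * σ y ≤ a₂ / b₂ * y ^ 2 := by
  have h₁ : |y / b₁| ≤ 1 := by
    rw [abs_div, abs_of_pos hσ.hb₁, div_le_one hσ.hb₁]; exact hy.trans (min_le_left _ _)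
  have h₂ : |y / b₂| ≤ 1 := by
    rw [abs_div, abs_of_pos hσ.hb₂, div_le_one hσ.hb₂]; exact hy.trans (min_le_right _ _)
  constructor
  · refine le_of_eq_of_le ?_ (hσ.lower y)
    rw [satur_eq_self h₁]; ring
  · refine (hσ.upper y).trans_eq ?_
    rw [satur_eq_self h₂]; ring

lemma map_zero (hσ : IsSFun σ a₁ a₂ b₁ b₂ si Cs) : σ 0 = 0 := by
  have hlin : ∀ c : ℝ, Tendsto (fun y => c * y) (𝓝[>] 0) (𝓝 0) := fun c =>
    ((continuous_const_mul c).tendsto' 0 0 (mul_zero c)).mono_left nhdsWithin_le_nhds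
  have hsq : ∀ᶠ y in 𝓝[>] (0 : ℝ), a₁ / b₁ * y ≤ σ y ∧ σ y ≤ a₂ / b₂ * y := by
    filter_upwards [Ioo_mem_nhdsGT (lt_min hσ.hb₁ hσ.hb₂)] with y hy
    obtain ⟨h₁, h₂⟩ := hσ.sector_of_abs_le (abs_of_pos hy.1 ▸ hy.2.le)
    exact ⟨le_of_mul_le_mul_left (by linarith) hy.1, le_of_mul_le_mul_left (by linarith) hy.1⟩
  exact tendsto_nhds_unique (hσ.lip.continuous.continuousWithinAt.tendsto)
    (tendsto_of_tendsto_of_tendsto_of_le_of_le' (hlin _) (hlin _)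
      (hsq.mono fun _ h => h.1) (hsq.mono fun _ h => h.2))

lemma exists_sector (hσ : IsSFun σ a₁ a₂ b₁ b₂ si Cs) {y : ℝ} (hy : |y| ≤ min b₁ b₂) :
    ∃ ρ ∈ Set.Icc (a₁ / b₁) (a₂ / b₂), σ y = ρ * y := by
  rcases eq_or_ne y 0 with rfl | hy₀
  · exact ⟨a₁ / b₁, ⟨le_rfl, hσ.hq⟩, by rw [hσ.map_zero, mul_zero]⟩
  obtain ⟨h₁, h₂⟩ := hσ.sector_of_abs_le hy
  have hy₂ : 0 < y ^ 2 := by positivity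
  have hquot : σ y / y * y ^ 2 = y * σ y := by field_simp
  refine ⟨σ y / y, ⟨?_, ?_⟩, by field_simp⟩
  · exact le_of_mul_le_mul_right (hquot ▸ h₁) hy₂
  · exact le_of_mul_le_mul_right (hquot ▸ h₂) hy₂

lemma abs_le (hσ : IsSFun σ a₁ a₂ b₁ b₂ si Cs) (t : ℝ) : |σ t| ≤ a₂ := by
  have ha₂ : 0 < a₂ := hσ.ha₁.trans_le hσ.h₁₂
  rcases eq_or_ne t 0 with rfl | ht
  · rw [hσ.map_zero, abs_zero]; exact ha₂.le
  have hpos : 0 ≤ t * σ t := by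
    have := mul_nonneg hσ.ha₁.le (mul_satur_div_nonneg hσ.hb₁ t)
    linarith [hσ.lower t]
  have hup : |t| * |σ t| ≤ |t| * a₂ :=
    calc |t| * |σ t| = a₂ * t * satur (t / b₂) - (a₂ * t * satur (t / b₂) - t * σ t) := by
          rw [← abs_mul, abs_of_nonneg hpos]; ring
      _ ≤ a₂ * |t * satur (t / b₂)| := by
          have := mul_le_mul_of_nonneg_left (le_abs_self (t * satur (t / b₂))) ha₂.le
          linarith [hσ.upper t]
      _ ≤ |t| * a₂ := by
          rw [abs_mul, mul_comm |t| a₂]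
          gcongr
          exact mul_le_of_le_one_right (abs_nonneg t) (abs_satur_le_one _)
  exact le_of_mul_le_mul_left hup (abs_pos.mpr ht)

end IsSFun

namespace Matrix

lemma PosSemidef.isSymm {ι : Type*} {P : Matrix ι ι ℝ} (hP : P.PosSemidef) : P.IsSymm :=
  isHermitian_iff_isSymm.mp hP.isHermitian

variable {ι : Type*} [Fintype ι] {P : Matrix ι ι ℝ}

lemma IsSymm.dotProduct_mulVec_comm (hP : P.IsSymm) (u v : ι → ℝ) :
    u ⬝ᵥ (P *ᵥ v) = v ⬝ᵥ (P *ᵥ u) := by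
  rw [dotProduct_mulVec, ← mulVec_transpose, hP.eq, dotProduct_comm]

lemma PosSemidef.abs_dotProduct_mulVec_le (hP : P.PosSemidef) (u v : ι → ℝ) :
    |u ⬝ᵥ (P *ᵥ v)| ≤ √(u ⬝ᵥ (P *ᵥ u)) * √(v ⬝ᵥ (P *ᵥ v)) := by
  have hquad : ∀ s : ℝ, 0 ≤ (u ⬝ᵥ (P *ᵥ u)) * (s * s) + 2 * (u ⬝ᵥ (P *ᵥ v)) * s
      + v ⬝ᵥ (P *ᵥ v) := fun s => by
    have h := hP.dotProduct_mulVec_nonneg (v + s • u)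
    rw [star_trivial, mulVec_add, mulVec_smul, dotProduct_add, add_dotProduct, add_dotProduct,
      dotProduct_smul, smul_dotProduct, smul_dotProduct, dotProduct_smul,
      hP.isSymm.dotProduct_mulVec_comm v u] at h
    simp only [smul_eq_mul] at h
    linarith
  have hdisc := discrim_le_zero hquad
  rw [discrim] at hdisc
  rw [← Real.sqrt_mul (by simpa using hP.dotProduct_mulVec_nonneg u)]
  exact Real.abs_le_sqrt (by linarith)

lemma sq_le_dotProduct_self (x : ι → ℝ) (i : ι) : x i ^ 2 ≤ x ⬝ᵥ x := by
  simpa only [dotProduct, sq] using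
    Finset.single_le_sum (fun k _ => mul_self_nonneg (x k)) (Finset.mem_univ i)

lemma exists_dotProduct_mulVec_le (P : Matrix ι ι ℝ) :
    ∃ C > 0, ∀ x : ι → ℝ, x ⬝ᵥ (P *ᵥ x) ≤ C * (x ⬝ᵥ x) := by
  refine ⟨∑ i, ∑ j, |P i j| + 1, by positivity, fun x => ?_⟩
  have hxx : 0 ≤ x ⬝ᵥ x := Finset.sum_nonneg fun k _ => mul_self_nonneg (x k)
  have hentry : ∀ i j, x i * (P i j * x j) ≤ |P i j| * (x ⬝ᵥ x) := fun i j => by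
    have hij : |x i| * |x j| ≤ x ⬝ᵥ x := by
      nlinarith [two_mul_le_add_sq |x i| |x j|, sq_abs (x i), sq_abs (x j),
        sq_le_dotProduct_self x i, sq_le_dotProduct_self x j]
    calc x i * (P i j * x j) ≤ |P i j| * (|x i| * |x j|) := by
          rw [← abs_mul, ← abs_mul, mul_left_comm]; exact le_abs_self _
      _ ≤ |P i j| * (x ⬝ᵥ x) := by gcongr
  calc x ⬝ᵥ (P *ᵥ x) = ∑ i, ∑ j, x i * (P i j * x j) := by
        simp only [dotProduct, mulVec, Finset.mul_sum]
    _ ≤ ∑ i, ∑ j, |P i j| * (x ⬝ᵥ x) :=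
        Finset.sum_le_sum fun i _ => Finset.sum_le_sum fun j _ => hentry i j
    _ ≤ (∑ i, ∑ j, |P i j| + 1) * (x ⬝ᵥ x) := by
        simp only [← Finset.sum_mul]; gcongr; linarith

lemma IsSymm.dotProduct_mulVec_mulVec_le (hP : P.IsSymm) {A : Matrix ι ι ℝ} [DecidableEq ι]
    (hA : (-(Aᵀ * P + P * A + 1)).PosSemidef) (x : ι → ℝ) :
    x ⬝ᵥ (P *ᵥ (A *ᵥ x)) ≤ -(x ⬝ᵥ x) / 2 := by
  have h := hA.dotProduct_mulVec_nonneg x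
  rw [star_trivial, neg_mulVec, dotProduct_neg, add_mulVec, add_mulVec, one_mulVec,
    dotProduct_add, dotProduct_add, ← mulVec_mulVec, ← mulVec_mulVec, dotProduct_mulVec x Aᵀ,
    vecMul_transpose, hP.dotProduct_mulVec_comm (A *ᵥ x) x] at h
  linarith

lemma PosSemidef.dotProduct_mulVec_sub_smul_le (hP : P.PosSemidef) {A : Matrix ι ι ℝ}
    [DecidableEq ι] (hA : (-(Aᵀ * P + P * A + 1)).PosSemidef) (x e : ι → ℝ) (δ : ℝ) :
    x ⬝ᵥ (P *ᵥ (A *ᵥ x - δ • e)) ≤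
      -(x ⬝ᵥ x) / 2 + |δ| * (√(x ⬝ᵥ (P *ᵥ x)) * √(e ⬝ᵥ (P *ᵥ e))) := by
  have hA' := hP.isSymm.dotProduct_mulVec_mulVec_le hA x
  have hcs := hP.abs_dotProduct_mulVec_le x e
  have hδ : -(δ * (x ⬝ᵥ (P *ᵥ e))) ≤ |δ| * (√(x ⬝ᵥ (P *ᵥ x)) * √(e ⬝ᵥ (P *ᵥ e))) :=
    (neg_le_abs _).trans (abs_mul δ _ ▸ by gcongr)
  rw [mulVec_sub, mulVec_smul, dotProduct_sub, dotProduct_smul, smul_eq_mul]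
  linarith

lemma IsSymm.fderiv_sqrt_dotProduct_mulVec_self [DecidableEq ι] (hP : P.IsSymm) {x : ι → ℝ}
    (hx : 0 < x ⬝ᵥ (P *ᵥ x)) (v : ι → ℝ) :
    fderiv ℝ (fun y => √(y ⬝ᵥ (P *ᵥ y))) x v = x ⬝ᵥ (P *ᵥ v) / √(x ⬝ᵥ (P *ᵥ x)) := by
  have h := ((toLinearMap₂' ℝ P).toContinuousBilinearMap.hasFDerivAt_of_bilinear
    (hasFDerivAt_id x) (hasFDerivAt_id x)).sqrt
  simp only [id, LinearMap.toContinuousBilinearMap_apply, toLinearMap₂'_apply'] at h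
  rw [(h hx.ne').fderiv]
  simp [toLinearMap₂'_apply', hP.dotProduct_mulVec_comm v x]
  field_simp
  ring

lemma PosSemidef.fderiv_sqrt_dotProduct_mulVec_sub_smul_le [DecidableEq ι] (hP : P.PosSemidef)
    {A : Matrix ι ι ℝ} (hA : (-(Aᵀ * P + P * A + 1)).PosSemidef) {C : ℝ} (hC : 0 < C) {x : ι → ℝ}
    (hx : 0 < x ⬝ᵥ (P *ᵥ x)) (hxC : x ⬝ᵥ (P *ᵥ x) ≤ C * (x ⬝ᵥ x)) (e : ι → ℝ) (δ : ℝ) :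
    fderiv ℝ (fun y => √(y ⬝ᵥ (P *ᵥ y))) x (A *ᵥ x - δ • e) ≤
      -(1 / C / 2) * √(x ⬝ᵥ (P *ᵥ x)) + |δ| * √(e ⬝ᵥ (P *ᵥ e)) := by
  have hxx : √(x ⬝ᵥ (P *ᵥ x)) ^ 2 / C ≤ x ⬝ᵥ x := by
    rw [Real.sq_sqrt hx.le, div_le_iff₀ hC, mul_comm]; exact hxC
  rw [hP.isSymm.fderiv_sqrt_dotProduct_mulVec_self hx, div_le_iff₀ (Real.sqrt_pos.mpr hx)]
  calc _ ≤ -(x ⬝ᵥ x) / 2 + |δ| * (√(x ⬝ᵥ (P *ᵥ x)) * √(e ⬝ᵥ (P *ᵥ e))) :=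
        hP.dotProduct_mulVec_sub_smul_le hA x e δ
    _ ≤ -(√(x ⬝ᵥ (P *ᵥ x)) ^ 2 / C) / 2 + |δ| * (√(x ⬝ᵥ (P *ᵥ x)) * √(e ⬝ᵥ (P *ᵥ e))) := by
        gcongr
    _ = _ := by ring

end Matrix

lemma mulVec_sub_smul_eq_of_eq_mul {ι : Type*} [Fintype ι] (J : Matrix ι ι ℝ) (e K x : ι → ℝ)
    {L ρ s t : ℝ} (ht : t = ρ * (K ⬝ᵥ x)) :
    J *ᵥ x - (L * s) • e = (J - (ρ * L) • vecMulVec e K) *ᵥ x - (L * (s - t)) • e := by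
  rw [sub_mulVec, smul_mulVec, vecMulVec_mulVec, op_smul_eq_smul, smul_smul, ht]
  module

lemma eVec_self_ne_zero {n : ℕ} (hn : 0 < n) : eVec n n ≠ 0 := fun h => by
  simpa [eVec, Nat.sub_add_cancel hn] using congr_fun h ⟨n - 1, by omega⟩

theorem linear_region_ISS_inequality_general (n : ℕ) (hn : 0 < n)
    (σ : ℝ → ℝ) (a₁ a₂ b₁ b₂ si Cs : ℝ) (hσ : IsSFun σ a₁ a₂ b₁ b₂ si Cs)
    (L : ℝ) (hL : 0 < L) (K : Fin n → ℝ) (P : Matrix (Fin n) (Fin n) ℝ)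
    (hPpos : P.PosDef)
    (hlyap : ∀ ρ ∈ Set.Icc (a₁ / b₁) (a₂ / b₂),
      (-((Jmat n - (ρ * L) • vecMulVec (eVec n n) K)ᵀ * P +
          P * (Jmat n - (ρ * L) • vecMulVec (eVec n n) K) + 1)).PosSemidef)
    (A : ℝ)
    (hAK : ∀ x : Fin n → ℝ, Real.sqrt (x ⬝ᵥ (P *ᵥ x)) ≤ A →
      |K ⬝ᵥ x| ≤ min 1 (min b₁ b₂)) :
    ∃ c₀ l₀ : ℝ, 0 < c₀ ∧ 0 < l₀ ∧
      ∀ x : Fin n → ℝ, x ≠ 0 → Real.sqrt (x ⬝ᵥ (P *ᵥ x)) ≤ A → ∀ d : ℝ,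
        fderiv ℝ (fun y : Fin n → ℝ => Real.sqrt (y ⬝ᵥ (P *ᵥ y))) x
            ((Jmat n) *ᵥ x - (L * σ (K ⬝ᵥ x + d)) • eVec n n) ≤
          -(c₀ / 2) * Real.sqrt (x ⬝ᵥ (P *ᵥ x)) + 4 * l₀ * min 1 |d| := by
  obtain ⟨M, hM, hΔ⟩ := hσ.lip.exists_abs_sub_le_mul_min hσ.abs_le
  obtain ⟨C, hC, hPC⟩ := exists_dotProduct_mulVec_le P
  have he : 0 < √(eVec n n ⬝ᵥ (P *ᵥ eVec n n)) :=
    Real.sqrt_pos.mpr (by simpa using hPpos.dotProduct_mulVec_pos (eVec_self_ne_zero hn))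
  refine ⟨1 / C, L * M * √(eVec n n ⬝ᵥ (P *ᵥ eVec n n)) / 4, by positivity, by positivity,
    fun x hx hxA d => ?_⟩
  have hQ : 0 < x ⬝ᵥ (P *ᵥ x) := by simpa using hPpos.dotProduct_mulVec_pos hx
  have hKx := hAK x hxA
  obtain ⟨ρ, hρ, hσρ⟩ := hσ.exists_sector (hKx.trans (min_le_right _ _))
  rw [mulVec_sub_smul_eq_of_eq_mul (Jmat n) (eVec n n) K x hσρ]
  calc _ ≤ -(1 / C / 2) * √(x ⬝ᵥ (P *ᵥ x)) +
        |L * (σ (K ⬝ᵥ x + d) - σ (K ⬝ᵥ x))| * √(eVec n n ⬝ᵥ (P *ᵥ eVec n n)) :=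
        hPpos.posSemidef.fderiv_sqrt_dotProduct_mulVec_sub_smul_le (hlyap ρ hρ) hC hQ (hPC x) _ _
    _ ≤ -(1 / C / 2) * √(x ⬝ᵥ (P *ᵥ x)) +
        L * (M * min 1 |d|) * √(eVec n n ⬝ᵥ (P *ᵥ eVec n n)) := by
        rw [abs_mul, abs_of_pos hL]
        gcongr
        exact hΔ _ d (hKx.trans (min_le_left _ _))
    _ = _ := by ring

/-- given an S-function `σ`, `l_n > 0`, `K ∈ ℝ^n` and a symmetric
positive definite `P` such that `(J_n - ρ l_n e_n Kᵀ)ᵀP + P(J_n - ρ l_n e_n Kᵀ) + Id`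
is negative semidefinite for all `ρ ∈ [a₁/b₁, a₂/b₂]`, with `V₀(x) = (xᵀPx)^{1/2}`
and `A > 0` such that `|Kᵀx| ≤ min(1,b₁,b₂)` on `{V₀ ≤ A}`, there are `c₀, l₀ > 0`
with `∇V₀(x)·(J_n x - l_n e_n σ(Kᵀx + d)) ≤ -(c₀/2)V₀(x) + 4 l₀ min(1,|d|)` on
`{V₀ ≤ A} ∖ {0}`. -/
theorem linear_region_ISS_inequality (n : ℕ) (hn : 0 < n)
    (σ : ℝ → ℝ) (a₁ a₂ b₁ b₂ si Cs : ℝ) (hσ : IsSFun σ a₁ a₂ b₁ b₂ si Cs)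
    (L : ℝ) (hL : 0 < L) (K : Fin n → ℝ) (P : Matrix (Fin n) (Fin n) ℝ)
    (hPsymm : P.IsSymm) (hPpos : P.PosDef)
    (hlyap : ∀ ρ ∈ Set.Icc (a₁ / b₁) (a₂ / b₂),
      (-((Jmat n - (ρ * L) • vecMulVec (eVec n n) K)ᵀ * P +
          P * (Jmat n - (ρ * L) • vecMulVec (eVec n n) K) + 1)).PosSemidef)
    (A : ℝ) (hA : 0 < A)
    (hAK : ∀ x : Fin n → ℝ, Real.sqrt (x ⬝ᵥ (P *ᵥ x)) ≤ A →
      |K ⬝ᵥ x| ≤ min 1 (min b₁ b₂)) :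
    ∃ c₀ l₀ : ℝ, 0 < c₀ ∧ 0 < l₀ ∧
      ∀ x : Fin n → ℝ, x ≠ 0 → Real.sqrt (x ⬝ᵥ (P *ᵥ x)) ≤ A → ∀ d : ℝ,
        fderiv ℝ (fun y : Fin n → ℝ => Real.sqrt (y ⬝ᵥ (P *ᵥ y))) x
            ((Jmat n) *ᵥ x - (L * σ (K ⬝ᵥ x + d)) • eVec n n) ≤
          -(c₀ / 2) * Real.sqrt (x ⬝ᵥ (P *ᵥ x)) + 4 * l₀ * min 1 |d| :=
  linear_region_ISS_inequality_general n hn σ a₁ a₂ b₁ b₂ si Cs hσ L hL K P hPpos hlyap A hAK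
end
end

section
/- Let l_n > 0, 0 < ρ_1 ≤ ρ_2, K ∈ ℝ^n, and P a symmetric positive definite n×n real matrix such that for every ρ ∈ [ρ_1, ρ_2] the matrix (J_n − ρ l_n e_n Kᵀ)ᵀ P + P (J_n − ρ l_n e_n Kᵀ) + Id_n is negative semidefinite. Define V_0(x) = (xᵀ P x)^{1/2}. Then there exist positive constants c_0 and l_0 such that for every x ∈ ℝ^n ∖ {0}, every ρ ∈ [ρ_1, ρ_2], and every d ∈ ℝ: ∇V_0(x)·((J_n − ρ l_n e_n Kᵀ) x + e_n d) ≤ −c_0 V_0(x) + l_0 |d|. -/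
open MeasureTheory Filter Matrix

noncomputable section

/-! With `V x = √(xᵀPx)` one has `∇V(x)·u = xᵀPu / V x`. The Lyapunov inequality gives
`2 xᵀPAx ≤ -|x|² ≤ -V(x)²/M` for any `M` bounding `P` on the unit sphere (here
`M = ∑ |Pᵢⱼ| + 1`), and Cauchy–Schwarz for the form `P` gives `|xᵀPe| ≤ V x · √(eᵀPe)`.
Dividing by `V x` yields `c₀ = 1/(2M)` and `l₀ = √(eᵀPe) + 1`. -/

theorem fderiv_sqrt_bilinear_self_apply {E : Type*} [NormedAddCommGroup E] [NormedSpace ℝ E]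
    (B : E →L[ℝ] E →L[ℝ] ℝ) {x : E} (hx : B x x ≠ 0) (u : E) :
    fderiv ℝ (fun y => √(B y y)) x u = (B x u + B u x) / (2 * √(B x x)) := by
  have h : HasFDerivAt (fun y => √(B y y)) _ x :=
    (B.hasFDerivAt_of_bilinear (hasFDerivAt_id x) (hasFDerivAt_id x)).sqrt hx
  rw [h.fderiv]
  simp only [id_eq, _root_.smul_apply, _root_.add_apply,
    ContinuousLinearMap.precompR_apply, ContinuousLinearMap.precompL_apply,
    ContinuousLinearMap.compL_apply, ContinuousLinearMap.comp_id, ContinuousLinearMap.id_apply,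
    smul_eq_mul]
  ring

variable {ι : Type*} [Fintype ι]

theorem Matrix.IsSymm.dotProduct_mulVec_comm_s9 {P : Matrix ι ι ℝ} (hP : P.IsSymm) (u v : ι → ℝ) :
    u ⬝ᵥ P *ᵥ v = v ⬝ᵥ P *ᵥ u := by
  rw [dotProduct_mulVec, ← mulVec_transpose, hP.eq, dotProduct_comm]

theorem fderiv_sqrt_dotProduct_mulVec_self_apply {P : Matrix ι ι ℝ} (hP : P.IsSymm) {x : ι → ℝ}
    (hx : x ⬝ᵥ P *ᵥ x ≠ 0) (u : ι → ℝ) :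
    fderiv ℝ (fun y => √(y ⬝ᵥ P *ᵥ y)) x u = (x ⬝ᵥ P *ᵥ u) / √(x ⬝ᵥ P *ᵥ x) := by
  classical
  let B : (ι → ℝ) →L[ℝ] (ι → ℝ) →L[ℝ] ℝ := LinearMap.toContinuousLinearMap
    (LinearMap.toContinuousLinearMap.toLinearMap ∘ₗ Matrix.toLinearMap₂' ℝ P)
  have hB (v w : ι → ℝ) : B v w = v ⬝ᵥ P *ᵥ w := Matrix.toLinearMap₂'_apply' P v w
  have h := fderiv_sqrt_bilinear_self_apply B (x := x) (by rwa [hB]) u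
  simp only [hB, hP.dotProduct_mulVec_comm_s9 u x] at h
  rw [h]
  ring

theorem Matrix.PosSemidef.abs_dotProduct_mulVec_le_s9 {P : Matrix ι ι ℝ} (hP : P.PosSemidef)
    (u v : ι → ℝ) : |u ⬝ᵥ P *ᵥ v| ≤ √(u ⬝ᵥ P *ᵥ u) * √(v ⬝ᵥ P *ᵥ v) := by
  classical
  have hB (v w : ι → ℝ) : toLinearMap₂' ℝ P v w = v ⬝ᵥ P *ᵥ w := toLinearMap₂'_apply' P v w
  have hCS := LinearMap.BilinForm.apply_mul_apply_le_of_forall_zero_le (toLinearMap₂' ℝ P)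
    (fun w => by simpa [hB] using hP.dotProduct_mulVec_nonneg w) u v
  rw [hB, hB, hB, hB, (isHermitian_iff_isSymm.mp hP.isHermitian).dotProduct_mulVec_comm_s9 v u,
    ← sq] at hCS
  rw [← Real.sqrt_mul (by simpa using hP.dotProduct_mulVec_nonneg u)]
  exact Real.abs_le_sqrt hCS

theorem dotProduct_mulVec_le_sum_abs_mul (P : Matrix ι ι ℝ) (x : ι → ℝ) :
    x ⬝ᵥ P *ᵥ x ≤ (∑ i, ∑ j, |P i j|) * (x ⬝ᵥ x) := by
  have hsq (i : ι) : x i * x i ≤ x ⬝ᵥ x :=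
    Finset.single_le_sum (f := fun k => x k * x k) (fun k _ => mul_self_nonneg _)
      (Finset.mem_univ i)
  have hterm (i j : ι) : x i * (P i j * x j) ≤ |P i j| * (x ⬝ᵥ x) := by
    have hij : |x i| * |x j| ≤ x ⬝ᵥ x := by
      nlinarith [hsq i, hsq j, abs_mul_abs_self (x i), abs_mul_abs_self (x j),
        sq_nonneg (|x i| - |x j|)]
    calc x i * (P i j * x j) ≤ |P i j| * (|x i| * |x j|) := by
          rw [← abs_mul, ← abs_mul]; exact (le_abs_self _).trans_eq (by ring_nf)
      _ ≤ |P i j| * (x ⬝ᵥ x) := by gcongr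
  calc x ⬝ᵥ P *ᵥ x = ∑ i, ∑ j, x i * (P i j * x j) := by
        simp only [dotProduct, mulVec, Finset.mul_sum]
    _ ≤ ∑ i, ∑ j, |P i j| * (x ⬝ᵥ x) :=
          Finset.sum_le_sum fun i _ => Finset.sum_le_sum fun j _ => hterm i j
    _ = (∑ i, ∑ j, |P i j|) * (x ⬝ᵥ x) := by simp only [Finset.sum_mul]

theorem two_mul_dotProduct_mulVec_add_self_nonpos [DecidableEq ι] {P A : Matrix ι ι ℝ}
    (hP : P.IsSymm) (hA : (-(Aᵀ * P + P * A + 1)).PosSemidef) (x : ι → ℝ) :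
    2 * (x ⬝ᵥ P *ᵥ (A *ᵥ x)) + x ⬝ᵥ x ≤ 0 := by
  have h := hA.dotProduct_mulVec_nonneg x
  rw [star_trivial, neg_mulVec, dotProduct_neg, add_mulVec, add_mulVec, one_mulVec,
    ← mulVec_mulVec, ← mulVec_mulVec, dotProduct_add, dotProduct_add, dotProduct_mulVec x Aᵀ,
    vecMul_transpose, hP.dotProduct_mulVec_comm_s9 (A *ᵥ x) x] at h
  linarith

theorem fderiv_sqrt_dotProduct_mulVec_self_le [DecidableEq ι] {P A : Matrix ι ι ℝ}
    (hP : P.PosDef) (hA : (-(Aᵀ * P + P * A + 1)).PosSemidef) {M : ℝ} {x : ι → ℝ} (hx : x ≠ 0)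
    (hM : x ⬝ᵥ P *ᵥ x ≤ M * (x ⬝ᵥ x)) (b : ι → ℝ) (d : ℝ) :
    fderiv ℝ (fun y => √(y ⬝ᵥ P *ᵥ y)) x (A *ᵥ x + d • b) ≤
      -(1 / (2 * M)) * √(x ⬝ᵥ P *ᵥ x) + √(b ⬝ᵥ P *ᵥ b) * |d| := by
  have hPsymm : P.IsSymm := isHermitian_iff_isSymm.mp hP.isHermitian
  have ht : 0 < x ⬝ᵥ P *ᵥ x := by simpa using hP.dotProduct_mulVec_pos hx
  set t := x ⬝ᵥ P *ᵥ x
  have hV : 0 < √t := Real.sqrt_pos.mpr ht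
  have hM0 : 0 < M := pos_of_mul_pos_left (ht.trans_le hM) (dotProduct_self_star_nonneg x)
  have hdecay : x ⬝ᵥ P *ᵥ (A *ᵥ x) ≤ -(√t ^ 2 / (2 * M)) := by
    have hlyap := two_mul_dotProduct_mulVec_add_self_nonpos hPsymm hA x
    have hxx : t / M ≤ x ⬝ᵥ x := (div_le_iff₀ hM0).mpr (by linarith)
    have : √t ^ 2 / (2 * M) = t / M / 2 := by rw [Real.sq_sqrt ht.le]; ring
    linarith
  have hdisturb : d * (x ⬝ᵥ P *ᵥ b) ≤ |d| * (√t * √(b ⬝ᵥ P *ᵥ b)) := by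
    calc d * (x ⬝ᵥ P *ᵥ b) ≤ |d| * |x ⬝ᵥ P *ᵥ b| := (le_abs_self _).trans_eq (abs_mul _ _)
      _ ≤ |d| * (√t * √(b ⬝ᵥ P *ᵥ b)) := by
        gcongr; exact hP.posSemidef.abs_dotProduct_mulVec_le_s9 x b
  rw [fderiv_sqrt_dotProduct_mulVec_self_apply hPsymm ht.ne', mulVec_add, mulVec_smul,
    dotProduct_add, dotProduct_smul, smul_eq_mul]
  calc (x ⬝ᵥ P *ᵥ (A *ᵥ x) + d * (x ⬝ᵥ P *ᵥ b)) / √t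
      ≤ (-(√t ^ 2 / (2 * M)) + |d| * (√t * √(b ⬝ᵥ P *ᵥ b))) / √t := by gcongr
    _ = -(1 / (2 * M)) * √t + √(b ⬝ᵥ P *ᵥ b) * |d| := by field_simp

theorem quadratic_ISS_inequality_general (n : ℕ)
    (L : ℝ) (ρ₁ ρ₂ : ℝ)
    (K : Fin n → ℝ) (P : Matrix (Fin n) (Fin n) ℝ)
    (hPpos : P.PosDef)
    (hlyap : ∀ ρ ∈ Set.Icc ρ₁ ρ₂,
      (-((Jmat n - (ρ * L) • vecMulVec (eVec n n) K)ᵀ * P +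
          P * (Jmat n - (ρ * L) • vecMulVec (eVec n n) K) + 1)).PosSemidef) :
    ∃ c₀ l₀ : ℝ, 0 < c₀ ∧ 0 < l₀ ∧
      ∀ x : Fin n → ℝ, x ≠ 0 → ∀ ρ ∈ Set.Icc ρ₁ ρ₂, ∀ d : ℝ,
        fderiv ℝ (fun y : Fin n → ℝ => Real.sqrt (y ⬝ᵥ (P *ᵥ y))) x
            ((Jmat n - (ρ * L) • vecMulVec (eVec n n) K) *ᵥ x + d • eVec n n) ≤
          -c₀ * Real.sqrt (x ⬝ᵥ (P *ᵥ x)) + l₀ * |d| := by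
  set M := ∑ i, ∑ j, |P i j| + 1
  set q := eVec n n ⬝ᵥ P *ᵥ eVec n n
  refine ⟨1 / (2 * M), √q + 1, by positivity, by positivity, fun x hx ρ hρ d => ?_⟩
  have hM : x ⬝ᵥ P *ᵥ x ≤ M * (x ⬝ᵥ x) := by
    have hxx : 0 ≤ x ⬝ᵥ x := by simpa using dotProduct_self_star_nonneg x
    calc x ⬝ᵥ P *ᵥ x ≤ (∑ i, ∑ j, |P i j|) * (x ⬝ᵥ x) := dotProduct_mulVec_le_sum_abs_mul P x
      _ ≤ M * (x ⬝ᵥ x) := mul_le_mul_of_nonneg_right (by linarith) hxx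
  calc _ ≤ -(1 / (2 * M)) * √(x ⬝ᵥ P *ᵥ x) + √q * |d| :=
        fderiv_sqrt_dotProduct_mulVec_self_le hPpos (hlyap ρ hρ) hx hM (eVec n n) d
    _ ≤ _ := by gcongr; linarith

/-- given `l_n > 0`, `0 < ρ₁ ≤ ρ₂`, `K ∈ ℝ^n` and a symmetric positive
definite `P` making `(J_n - ρ l_n e_n Kᵀ)ᵀP + P(J_n - ρ l_n e_n Kᵀ) + Id` negative
semidefinite for all `ρ ∈ [ρ₁, ρ₂]`, with `V₀(x) = (xᵀPx)^{1/2}` there exist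
`c₀, l₀ > 0` such that for `x ≠ 0`, `ρ ∈ [ρ₁, ρ₂]`, `d ∈ ℝ`,
`∇V₀(x)·((J_n - ρ l_n e_n Kᵀ)x + e_n d) ≤ -c₀ V₀(x) + l₀ |d|`. -/
theorem quadratic_ISS_inequality (n : ℕ) (hn : 0 < n)
    (L : ℝ) (hL : 0 < L) (ρ₁ ρ₂ : ℝ) (hρ₁ : 0 < ρ₁) (hρ : ρ₁ ≤ ρ₂)
    (K : Fin n → ℝ) (P : Matrix (Fin n) (Fin n) ℝ)
    (hPsymm : P.IsSymm) (hPpos : P.PosDef)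
    (hlyap : ∀ ρ ∈ Set.Icc ρ₁ ρ₂,
      (-((Jmat n - (ρ * L) • vecMulVec (eVec n n) K)ᵀ * P +
          P * (Jmat n - (ρ * L) • vecMulVec (eVec n n) K) + 1)).PosSemidef) :
    ∃ c₀ l₀ : ℝ, 0 < c₀ ∧ 0 < l₀ ∧
      ∀ x : Fin n → ℝ, x ≠ 0 → ∀ ρ ∈ Set.Icc ρ₁ ρ₂, ∀ d : ℝ,
        fderiv ℝ (fun y : Fin n → ℝ => Real.sqrt (y ⬝ᵥ (P *ᵥ y))) x
            ((Jmat n - (ρ * L) • vecMulVec (eVec n n) K) *ᵥ x + d • eVec n n) ≤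
          -c₀ * Real.sqrt (x ⬝ᵥ (P *ᵥ x)) + l₀ * |d| :=
  quadratic_ISS_inequality_general n L ρ₁ ρ₂ K P hPpos hlyap
end
end

section
/- For any positive constants l_1, …, l_n: (a) W_i(x_1, …, x_i) ≥ 0 for every 1 ≤ i ≤ n and all arguments, with W_i(x_1,…,x_i) = 0 if and only if x_i = v_{i−1}(x_1,…,x_{i−1}); (b) V_n(x) ≥ 0 for all x ∈ ℝ^n and V_n(x) = 0 if and only if x = 0; (c) for each 1 ≤ i ≤ n there exists a constant C_i > 0 such that |x_i|^{β_{i−1}+1} ≤ C_i V_n(x) for all x = (x_1, …, x_n) ∈ ℝ^n. -/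
open MeasureTheory Filter Matrix

noncomputable section

/-! Each `W_i` is the Bregman divergence of the convex function `t ↦ |t|^{β+1}/(β+1)`
(`β = β_{i-1}`) between `x_i` and `v_{i-1}`. For `β ≥ 1` the elementary inequality
`⌊t⌉^β - ⌊v⌉^β ≥ 2^{1-β} (t - v)^β` for `v ≤ t` integrates to `W_i ≥ c |x_i - v_{i-1}|^{β+1}`;
this gives (a), and (b) follows because `v_{i-1}` vanishes once `x_1 = ⋯ = x_{i-1} = 0`.
For (c), `|v_i| ≤ l_i |ω_i|^{p_{i+1}/(p_i β_{i-1})}`, and since `p_{i+1}(β_i + 1) = p_i(β_{i-1} + 1)`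
the power `|v_i|^{β_i+1}` is `|ω_i|^{(β_{i-1}+1)/β_{i-1}}` up to a constant, which is controlled by
`|x_i|^{β_{i-1}+1} + |v_{i-1}|^{β_{i-1}+1}`. Induction on `i` then bounds
`|x_i|^{β_{i-1}+1} + |v_{i-1}|^{β_{i-1}+1}` by a multiple of `W_1 + ⋯ + W_i`. -/

lemma sgnPow_zero (a : ℝ) : sgnPow 0 a = 0 := by simp [sgnPow]

lemma sgnPow_neg (x a : ℝ) : sgnPow (-x) a = -sgnPow x a := by
  simp [sgnPow, Real.sign_neg]

lemma sgnPow_of_nonneg {x a : ℝ} (hx : 0 ≤ x) (ha : a ≠ 0) : sgnPow x a = x ^ a := by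
  rcases hx.eq_or_lt with rfl | hx
  · rw [sgnPow_zero, Real.zero_rpow ha]
  · rw [sgnPow, Real.sign_of_pos hx, abs_of_pos hx, mul_one]

lemma abs_sgnPow_le (x a : ℝ) : |sgnPow x a| ≤ |x| ^ a := by
  rw [sgnPow, abs_mul, abs_of_nonneg (Real.rpow_nonneg (abs_nonneg x) a)]
  refine mul_le_of_le_one_right (Real.rpow_nonneg (abs_nonneg x) a) ?_
  rcases Real.sign_apply_eq x with h | h | h <;> simp [h]

lemma hasDerivAt_abs_rpow_eq_sgnPow {q : ℝ} (hq : 1 < q) (x : ℝ) :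
    HasDerivAt (fun t : ℝ => |t| ^ q) (q * sgnPow x (q - 1)) x := by
  convert hasDerivAt_abs_rpow x hq using 1
  rcases eq_or_ne x 0 with rfl | hx
  · simp [sgnPow_zero]
  · have h : |x| ^ (q - 1) = |x| ^ (q - 2) * |x| := by
      rw [← Real.rpow_add_one (abs_ne_zero.mpr hx)]; ring_nf
    have hsign : |x| * Real.sign x = x := by
      rcases hx.lt_or_gt with hx | hx
      · rw [abs_of_neg hx, Real.sign_of_neg hx]; ring
      · rw [abs_of_pos hx, Real.sign_of_pos hx]; ring
    rw [sgnPow, h, mul_assoc, mul_assoc, hsign]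

lemma Real.rpow_add_le_two_rpow_mul {a b p : ℝ} (ha : 0 ≤ a) (hb : 0 ≤ b) (hp : 1 ≤ p) :
    (a + b) ^ p ≤ 2 ^ (p - 1) * (a ^ p + b ^ p) := by
  lift a to NNReal using ha
  lift b to NNReal using hb
  exact_mod_cast NNReal.rpow_add_le_mul_rpow_add_rpow a b hp

lemma abs_rpow_le_two_rpow_mul (x v : ℝ) {p : ℝ} (hp : 1 ≤ p) :
    |x| ^ p ≤ 2 ^ (p - 1) * (|x - v| ^ p + |v| ^ p) :=
  calc |x| ^ p ≤ (|x - v| + |v|) ^ p := by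
        gcongr; simpa using abs_add_le (x - v) v
    _ ≤ _ := Real.rpow_add_le_two_rpow_mul (abs_nonneg _) (abs_nonneg _) hp

/- The same-sign case is superadditivity of `t ↦ t ^ β`, the opposite-sign case is convexity. -/
lemma two_rpow_mul_sub_rpow_le_sgnPow_sub {β v t : ℝ} (hβ : 1 ≤ β) (h : v ≤ t) :
    2 ^ (1 - β) * (t - v) ^ β ≤ sgnPow t β - sgnPow v β := by
  have hβ0 : β ≠ 0 := by linarith
  have hc : (2 : ℝ) ^ (1 - β) ≤ 1 := Real.rpow_le_one_of_one_le_of_nonpos one_le_two (by linarith)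
  have same_sign : ∀ {v t : ℝ}, 0 ≤ v → v ≤ t →
      2 ^ (1 - β) * (t - v) ^ β ≤ sgnPow t β - sgnPow v β := by
    intro v t hv h
    rw [sgnPow_of_nonneg hv hβ0, sgnPow_of_nonneg (hv.trans h) hβ0]
    have hsup := Real.add_rpow_le_rpow_add (sub_nonneg.mpr h) hv hβ
    rw [sub_add_cancel] at hsup
    nlinarith [Real.rpow_nonneg (sub_nonneg.mpr h) β]
  rcases le_total 0 v with hv | hv
  · exact same_sign hv h
  rcases le_total t 0 with ht | ht
  · have := same_sign (neg_nonneg.mpr ht) (neg_le_neg h)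
    rwa [sgnPow_neg, sgnPow_neg, neg_sub_neg, sub_neg_eq_add, neg_add_eq_sub] at this
  · have hv' := sgnPow_neg (-v) β
    rw [neg_neg, sgnPow_of_nonneg (neg_nonneg.mpr hv) hβ0] at hv'
    rw [sgnPow_of_nonneg ht hβ0, hv', sub_neg_eq_add, sub_eq_add_neg]
    calc 2 ^ (1 - β) * (t + -v) ^ β
        ≤ 2 ^ (1 - β) * (2 ^ (β - 1) * (t ^ β + (-v) ^ β)) := by
          gcongr; exact Real.rpow_add_le_two_rpow_mul ht (neg_nonneg.mpr hv) hβ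
      _ = t ^ β + (-v) ^ β := by
          rw [← mul_assoc, ← Real.rpow_add two_pos]; norm_num

/-- The Bregman divergence at `v` of `t ↦ |t| ^ (β + 1) / (β + 1)`, whose derivative is
`sgnPow t β`; `Wfb n l i x` is this divergence with `β = β_{i-1}`, `v = v_{i-1}`, at `x_i`. -/
def bregmanAbsRpow (β v x : ℝ) : ℝ :=
  (|x| ^ (β + 1) - |v| ^ (β + 1)) / (β + 1) - sgnPow v β * (x - v)

lemma bregmanAbsRpow_self (β v : ℝ) : bregmanAbsRpow β v v = 0 := by
  simp [bregmanAbsRpow]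

lemma bregmanAbsRpow_zero_left {β : ℝ} (hβ : β + 1 ≠ 0) (x : ℝ) :
    bregmanAbsRpow β 0 x = |x| ^ (β + 1) / (β + 1) := by
  simp [bregmanAbsRpow, sgnPow_zero, Real.zero_rpow hβ]

lemma bregmanAbsRpow_neg (β v x : ℝ) : bregmanAbsRpow β (-v) (-x) = bregmanAbsRpow β v x := by
  simp only [bregmanAbsRpow, abs_neg, sgnPow_neg]
  ring

lemma hasDerivAt_bregmanAbsRpow {β : ℝ} (hβ : 0 < β) (v x : ℝ) :
    HasDerivAt (bregmanAbsRpow β v) (sgnPow x β - sgnPow v β) x := by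
  have hq : 1 < β + 1 := by linarith
  have := (((hasDerivAt_abs_rpow_eq_sgnPow hq x).sub_const (|v| ^ (β + 1))).div_const (β + 1)).sub
    (((hasDerivAt_id x).sub_const v).const_mul (sgnPow v β))
  refine this.congr_deriv ?_
  rw [add_sub_cancel_right, mul_div_cancel_left₀ _ (by linarith), mul_one]

lemma two_rpow_mul_abs_sub_rpow_le_bregmanAbsRpow {β : ℝ} (hβ : 1 ≤ β) (v x : ℝ) :
    2 ^ (1 - β) / (β + 1) * |x - v| ^ (β + 1) ≤ bregmanAbsRpow β v x := by
  wlog hvx : v ≤ x generalizing v x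
  · have := this (-v) (-x) (by linarith)
    rwa [bregmanAbsRpow_neg, ← neg_sub', abs_neg] at this
  have hβ0 : 0 < β := by linarith
  have hq : 1 < β + 1 := by linarith
  set g : ℝ → ℝ := fun t => bregmanAbsRpow β v t - 2 ^ (1 - β) / (β + 1) * |t - v| ^ (β + 1)
  have hg : ∀ t, HasDerivAt g (sgnPow t β - sgnPow v β - 2 ^ (1 - β) * sgnPow (t - v) β) t := by
    intro t
    have := ((hasDerivAt_abs_rpow_eq_sgnPow hq (t - v)).comp t
      ((hasDerivAt_id t).sub_const v)).const_mul (2 ^ (1 - β) / (β + 1))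
    refine ((hasDerivAt_bregmanAbsRpow hβ0 v t).sub this).congr_deriv ?_
    rw [add_sub_cancel_right, mul_one, ← mul_assoc, div_mul_cancel₀ _ (by linarith)]
  have hmono : MonotoneOn g (Set.Ici v) := by
    refine monotoneOn_of_deriv_nonneg (convex_Ici v)
      (fun t _ => (hg t).continuousAt.continuousWithinAt)
      (fun t _ => (hg t).differentiableAt.differentiableWithinAt) fun t ht => ?_
    rw [interior_Ici, Set.mem_Ioi] at ht
    rw [(hg t).deriv, sgnPow_of_nonneg (sub_nonneg.mpr ht.le) (by linarith)]
    linarith [two_rpow_mul_sub_rpow_le_sgnPow_sub hβ ht.le]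
  have := hmono Set.self_mem_Ici hvx hvx
  simp only [g, bregmanAbsRpow_self, sub_self, abs_zero, Real.zero_rpow (by linarith : β + 1 ≠ 0),
    mul_zero] at this
  linarith

lemma be_zero (n : ℕ) : be n 0 = 1 - 1 / n := by
  norm_num [be, pe]

lemma one_le_be {n k : ℕ} (hk1 : 1 ≤ k) (hk : k < n) : 1 ≤ be n k := by
  have hkn : (k : ℝ) < n := by exact_mod_cast hk
  have hk1' : (1 : ℝ) ≤ k := by exact_mod_cast hk1
  rw [be, if_neg (by omega), le_div_iff₀ (by linarith)]
  linarith

lemma be_nonneg {n k : ℕ} (hk : k < n) : 0 ≤ be n k := by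
  rcases Nat.eq_zero_or_pos k with rfl | hk1
  · rw [be_zero, sub_nonneg]
    exact div_le_one_of_le₀ (by exact_mod_cast hk) (Nat.cast_nonneg n)
  · linarith [one_le_be hk1 hk]

lemma be_pos {n k : ℕ} (hk : k + 1 < n) : 0 < be n k := by
  rcases Nat.eq_zero_or_pos k with rfl | hk1
  · rw [be_zero, sub_pos, div_lt_one (by positivity)]
    exact_mod_cast hk
  · linarith [one_le_be hk1 (by omega : k < n)]

lemma pe_succ_mul_be_add_one {n k : ℕ} (hk : k < n) : pe n (k + 1) * (be n k + 1) = 2 - 1 / n := by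
  have hn : (n : ℝ) ≠ 0 := by exact_mod_cast (Nat.zero_lt_of_lt hk).ne'
  rcases Nat.eq_zero_or_pos k with rfl | hk1
  · rw [be_zero, pe]
    ring
  · have hkn : (n : ℝ) - k ≠ 0 := sub_ne_zero.mpr (by exact_mod_cast hk.ne')
    rw [pe, be, if_neg (by omega)]
    push_cast
    field_simp
    ring

lemma vfb_eq_zero_of_forall {n : ℕ} (l : ℕ → ℝ) {x : ℕ → ℝ} :
    ∀ {i : ℕ}, (∀ j, 1 ≤ j → j ≤ i → x j = 0) → vfb n l i x = 0
  | 0, _ => rfl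
  | i + 1, hx => by
    rw [vfb, hx (i + 1) (by omega) le_rfl, vfb_eq_zero_of_forall l fun j hj hji => hx j hj (by omega),
      sgnPow_zero, sub_self, sgnPow_zero, mul_zero]

lemma Wfb_succ_eq_bregmanAbsRpow (n : ℕ) (l : ℕ → ℝ) (k : ℕ) (x : ℕ → ℝ) :
    Wfb n l (k + 1) x = bregmanAbsRpow (be n k) (vfb n l k x) (x (k + 1)) := rfl

/- For `k = 0` the exponent `β_0 = 1 - 1/n` may be below `1`, but then `v_0 = 0`. -/
lemma exists_mul_abs_sub_vfb_rpow_le_Wfb {n k : ℕ} (l : ℕ → ℝ) (hk : k < n) :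
    ∃ c, 0 < c ∧ ∀ x : ℕ → ℝ,
      c * |x (k + 1) - vfb n l k x| ^ (be n k + 1) ≤ Wfb n l (k + 1) x := by
  rcases Nat.eq_zero_or_pos k with rfl | hk1
  · have hq : 0 < be n 0 + 1 := by linarith [be_nonneg hk]
    refine ⟨1 / (be n 0 + 1), by positivity, fun x => ?_⟩
    rw [Wfb_succ_eq_bregmanAbsRpow, vfb, sub_zero, bregmanAbsRpow_zero_left hq.ne']
    exact (one_div_mul_eq_div _ _).le
  · have hq : 0 < be n k + 1 := by linarith [be_nonneg hk]
    exact ⟨2 ^ (1 - be n k) / (be n k + 1), by positivity, fun x =>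
      two_rpow_mul_abs_sub_rpow_le_bregmanAbsRpow (one_le_be hk1 hk) _ _⟩

lemma Wfb_nonneg_and_eq_zero_iff {n i : ℕ} (l : ℕ → ℝ) (hi1 : 1 ≤ i) (hin : i ≤ n)
    (x : ℕ → ℝ) : 0 ≤ Wfb n l i x ∧ (Wfb n l i x = 0 ↔ x i = vfb n l (i - 1) x) := by
  obtain ⟨k, rfl⟩ := Nat.exists_eq_add_of_le' hi1
  obtain ⟨c, hc, hcW⟩ := exists_mul_abs_sub_vfb_rpow_le_Wfb l (by omega : k < n)
  have hq : be n k + 1 ≠ 0 := by linarith [be_nonneg (by omega : k < n)]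
  have hW := hcW x
  refine ⟨le_trans (by positivity) hW, fun h => ?_, fun h => ?_⟩
  · rw [h] at hW
    have : |x (k + 1) - vfb n l k x| ^ (be n k + 1) = 0 :=
      le_antisymm (nonpos_of_mul_nonpos_right hW hc) (by positivity)
    rwa [Real.rpow_eq_zero (abs_nonneg _) hq, abs_eq_zero, sub_eq_zero] at this
  · rw [Wfb_succ_eq_bregmanAbsRpow, h, Nat.add_sub_cancel, bregmanAbsRpow_self]

lemma Wfb_nonneg {n i : ℕ} (l : ℕ → ℝ) (hi1 : 1 ≤ i) (hin : i ≤ n) (x : ℕ → ℝ) :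
    0 ≤ Wfb n l i x :=
  (Wfb_nonneg_and_eq_zero_iff l hi1 hin x).1

lemma exists_abs_rpow_add_le_mul_Wfb_add {n k : ℕ} (l : ℕ → ℝ) (hk : k < n) :
    ∃ C, 0 < C ∧ ∀ x : ℕ → ℝ,
      |x (k + 1)| ^ (be n k + 1) + |vfb n l k x| ^ (be n k + 1) ≤
        C * (Wfb n l (k + 1) x + |vfb n l k x| ^ (be n k + 1)) := by
  obtain ⟨c, hc, hcW⟩ := exists_mul_abs_sub_vfb_rpow_le_Wfb l hk
  set q := be n k + 1
  have hq : 1 ≤ q := by linarith [be_nonneg hk]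
  refine ⟨2 ^ (q - 1) / c + 2 ^ (q - 1) + 1, by positivity, fun x => ?_⟩
  set v := vfb n l k x
  set W := Wfb n l (k + 1) x
  have hW : 0 ≤ W := Wfb_nonneg l (by omega) (by omega) x
  have hv : 0 ≤ |v| ^ q := by positivity
  have hxv : |x (k + 1) - v| ^ q ≤ W / c := by
    rw [le_div_iff₀ hc, mul_comm]; exact hcW x
  calc |x (k + 1)| ^ q + |v| ^ q
      ≤ 2 ^ (q - 1) * (W / c + |v| ^ q) + |v| ^ q := by
        gcongr
        exact (abs_rpow_le_two_rpow_mul _ v hq).trans (by gcongr)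
    _ = 2 ^ (q - 1) / c * W + (2 ^ (q - 1) + 1) * |v| ^ q := by ring
    _ ≤ (2 ^ (q - 1) / c + 2 ^ (q - 1) + 1) * (W + |v| ^ q) := by
        nlinarith [show 0 ≤ 2 ^ (q - 1) / c by positivity, show (0 : ℝ) ≤ 2 ^ (q - 1) by positivity]

lemma exists_abs_vfb_succ_rpow_le {n k : ℕ} (l : ℕ → ℝ) (hk : k + 2 ≤ n) :
    ∃ K, 0 ≤ K ∧ ∀ x : ℕ → ℝ,
      |vfb n l (k + 1) x| ^ (be n (k + 1) + 1) ≤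
        K * (|x (k + 1)| ^ (be n k + 1) + |vfb n l k x| ^ (be n k + 1)) := by
  set β := be n k
  set q := be n (k + 1) + 1
  set s := (β + 1) / β
  have hβ : 0 < β := be_pos (by omega)
  have hq : 0 ≤ q := by linarith [be_nonneg (by omega : k + 1 < n)]
  have hs : 1 ≤ s := by rw [le_div_iff₀ hβ]; linarith
  have hβs : β * s = β + 1 := mul_div_cancel₀ _ hβ.ne'
  have hexp : pe n (k + 2) / (pe n (k + 1) * β) * q = s := by
    have h1 := pe_succ_mul_be_add_one (by omega : k < n)
    have h2 := pe_succ_mul_be_add_one (by omega : k + 1 < n)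
    have hpe : pe n (k + 1) ≠ 0 := by
      rintro hpe
      rw [hpe, zero_mul, eq_comm, sub_eq_zero] at h1
      have : (1 : ℝ) / n ≤ 1 := div_le_one_of_le₀ (by exact_mod_cast (by omega : 1 ≤ n)) (by positivity)
      linarith
    rw [div_mul_eq_mul_div, h2, ← h1, mul_div_mul_left _ _ hpe]
  refine ⟨|l (k + 1)| ^ q * 2 ^ (s - 1), by positivity, fun x => ?_⟩
  set w := vfb n l k x
  set ω := sgnPow (x (k + 1)) β - sgnPow w β
  have hv : |vfb n l (k + 1) x| ≤ |l (k + 1)| * |ω| ^ (pe n (k + 2) / (pe n (k + 1) * β)) := by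
    rw [vfb, abs_mul, abs_neg]
    gcongr
    exact abs_sgnPow_le _ _
  have hω : |ω| ≤ |x (k + 1)| ^ β + |w| ^ β :=
    (abs_sub _ _).trans (add_le_add (abs_sgnPow_le _ _) (abs_sgnPow_le _ _))
  calc |vfb n l (k + 1) x| ^ q
      ≤ (|l (k + 1)| * |ω| ^ (pe n (k + 2) / (pe n (k + 1) * β))) ^ q := by gcongr
    _ = |l (k + 1)| ^ q * |ω| ^ s := by
        rw [Real.mul_rpow (abs_nonneg _) (by positivity), ← Real.rpow_mul (abs_nonneg _), hexp]
    _ ≤ |l (k + 1)| ^ q * (2 ^ (s - 1) * ((|x (k + 1)| ^ β) ^ s + (|w| ^ β) ^ s)) := by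
        gcongr
        exact (Real.rpow_le_rpow (abs_nonneg _) hω (by linarith)).trans
          (Real.rpow_add_le_two_rpow_mul (by positivity) (by positivity) hs)
    _ = |l (k + 1)| ^ q * 2 ^ (s - 1) * (|x (k + 1)| ^ (β + 1) + |w| ^ (β + 1)) := by
        rw [← Real.rpow_mul (abs_nonneg _), ← Real.rpow_mul (abs_nonneg _), hβs]
        ring

lemma exists_abs_rpow_add_le_mul_sum_Wfb {n : ℕ} (l : ℕ → ℝ) :
    ∀ {k : ℕ}, k < n → ∃ C, 0 < C ∧ ∀ x : ℕ → ℝ,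
      |x (k + 1)| ^ (be n k + 1) + |vfb n l k x| ^ (be n k + 1) ≤
        C * ∑ j ∈ Finset.Icc 1 (k + 1), Wfb n l j x
  | 0, hk => by
    obtain ⟨C, hC, hQ⟩ := exists_abs_rpow_add_le_mul_Wfb_add l hk
    refine ⟨C, hC, fun x => ?_⟩
    have hv : |vfb n l 0 x| ^ (be n 0 + 1) = 0 := by
      rw [vfb, abs_zero, Real.zero_rpow (by linarith [be_nonneg hk])]
    simpa [hv] using hQ x
  | k + 1, hk => by
    obtain ⟨C, hC, hQ⟩ := exists_abs_rpow_add_le_mul_sum_Wfb l (by omega : k < n)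
    obtain ⟨A, hA, hAQ⟩ := exists_abs_rpow_add_le_mul_Wfb_add l hk
    obtain ⟨K, hK, hKv⟩ := exists_abs_vfb_succ_rpow_le l (by omega : k + 2 ≤ n)
    refine ⟨A * (1 + K * C), by positivity, fun x => ?_⟩
    set S := ∑ j ∈ Finset.Icc 1 (k + 1), Wfb n l j x
    have hS : 0 ≤ S := Finset.sum_nonneg fun j hj => by
      obtain ⟨hj1, hjk⟩ := Finset.mem_Icc.mp hj
      exact Wfb_nonneg l hj1 (by omega) x
    have hW : 0 ≤ Wfb n l (k + 2) x := Wfb_nonneg l (by omega) hk x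
    rw [Finset.sum_Icc_succ_top (by omega)]
    calc _ ≤ A * (Wfb n l (k + 2) x + K * (C * S)) :=
          (hAQ x).trans (by gcongr; exact (hKv x).trans (by gcongr; exact hQ x))
      _ ≤ A * (1 + K * C) * (S + Wfb n l (k + 2) x) := by
          nlinarith [mul_nonneg hK hC.le, mul_nonneg (mul_nonneg hK hC.le) hW]

lemma emb_of_mem {n j : ℕ} (x : Fin n → ℝ) (hj1 : 1 ≤ j) (hjn : j ≤ n) :
    emb n x j = x ⟨j - 1, Nat.sub_one_lt_of_le hj1 hjn⟩ :=
  dif_pos ⟨hj1, hjn⟩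

lemma emb_zero (n : ℕ) : emb n 0 = 0 := by
  ext j; simp [emb]

lemma Vn_nonneg (n : ℕ) (l : ℕ → ℝ) (x : Fin n → ℝ) : 0 ≤ Vn n l x :=
  Finset.sum_nonneg fun _ hj => Wfb_nonneg l (Finset.mem_Icc.mp hj).1 (Finset.mem_Icc.mp hj).2 _

lemma Vn_eq_zero_iff (n : ℕ) (l : ℕ → ℝ) (x : Fin n → ℝ) : Vn n l x = 0 ↔ x = 0 := by
  constructor
  · intro h
    have hW : ∀ j ∈ Finset.Icc 1 n, Wfb n l j (emb n x) = 0 :=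
      (Finset.sum_eq_zero_iff_of_nonneg fun _ hj =>
        Wfb_nonneg l (Finset.mem_Icc.mp hj).1 (Finset.mem_Icc.mp hj).2 _).mp h
    have hemb : ∀ i ≤ n, ∀ j, 1 ≤ j → j ≤ i → emb n x j = 0 := by
      intro i
      induction i with
      | zero => intro _ _ hj1 hj0; omega
      | succ i ih =>
        intro hi j hj1 hji
        rcases (by omega : j ≤ i ∨ j = i + 1) with hji | rfl
        · exact ih (by omega) j hj1 hji
        · rw [(Wfb_nonneg_and_eq_zero_iff l hj1 hi _).2.mp (hW _ (Finset.mem_Icc.mpr ⟨hj1, hi⟩)),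
            Nat.add_sub_cancel, vfb_eq_zero_of_forall l (ih (by omega))]
    ext j
    simpa [emb_of_mem x (by omega : 1 ≤ j.1 + 1) j.2] using hemb n le_rfl (j + 1) (by omega) j.2
  · rintro rfl
    refine Finset.sum_eq_zero fun j hj => ?_
    obtain ⟨hj1, hjn⟩ := Finset.mem_Icc.mp hj
    rw [(Wfb_nonneg_and_eq_zero_iff l hj1 hjn _).2, emb_zero, Pi.zero_apply]
    exact (vfb_eq_zero_of_forall l (x := 0) fun _ _ _ => rfl).symm

lemma exists_abs_rpow_le_mul_Vn {n i : ℕ} (l : ℕ → ℝ) (hi1 : 1 ≤ i) (hin : i ≤ n) :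
    ∃ C, 0 < C ∧ ∀ x : Fin n → ℝ,
      |x ⟨i - 1, Nat.sub_one_lt_of_le hi1 hin⟩| ^ (be n (i - 1) + 1) ≤ C * Vn n l x := by
  obtain ⟨k, rfl⟩ := Nat.exists_eq_add_of_le' hi1
  obtain ⟨C, hC, hQ⟩ := exists_abs_rpow_add_le_mul_sum_Wfb l (by omega : k < n)
  refine ⟨C, hC, fun x => ?_⟩
  have hsum : ∑ j ∈ Finset.Icc 1 (k + 1), Wfb n l j (emb n x) ≤ Vn n l x :=
    Finset.sum_le_sum_of_subset_of_nonneg (Finset.Icc_subset_Icc_right hin) fun _ hj _ =>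
      Wfb_nonneg l (Finset.mem_Icc.mp hj).1 (Finset.mem_Icc.mp hj).2 _
  calc |x ⟨k + 1 - 1, _⟩| ^ (be n (k + 1 - 1) + 1) = |emb n x (k + 1)| ^ (be n k + 1) := by
        rw [emb_of_mem x hi1 hin]; rfl
    _ ≤ C * ∑ j ∈ Finset.Icc 1 (k + 1), Wfb n l j (emb n x) :=
        le_of_add_le_of_nonneg_left (hQ _) (by positivity)
    _ ≤ C * Vn n l x := by gcongr

/-- for any positive gains: (a) `W_i ≥ 0` with `W_i = 0` iff
`x_i = v_{i-1}(x_1,…,x_{i-1})`; (b) `V_n ≥ 0` with `V_n(x) = 0` iff `x = 0`;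
(c) for each `1 ≤ i ≤ n` there is `C_i > 0` with
`|x_i|^{β_{i-1}+1} ≤ C_i V_n(x)` for all `x ∈ ℝ^n`. -/
theorem positivity_and_coercivity_of_V (n : ℕ)
    (l : ℕ → ℝ) :
    (∀ i : ℕ, 1 ≤ i → i ≤ n → ∀ x : ℕ → ℝ,
      0 ≤ Wfb n l i x ∧ (Wfb n l i x = 0 ↔ x i = vfb n l (i - 1) x)) ∧
    (∀ x : Fin n → ℝ, 0 ≤ Vn n l x ∧ (Vn n l x = 0 ↔ x = 0)) ∧
    ∀ i : ℕ, ∀ _ : 1 ≤ i, ∀ h2 : i ≤ n, ∃ C : ℝ, 0 < C ∧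
      ∀ x : Fin n → ℝ,
        |x ⟨i - 1, by omega⟩| ^ (be n (i - 1) + 1) ≤ C * Vn n l x :=
  ⟨fun _ hi1 hin => Wfb_nonneg_and_eq_zero_iff l hi1 hin,
    fun x => ⟨Vn_nonneg n l x, Vn_eq_zero_iff n l x⟩,
    fun _ hi1 hin => exists_abs_rpow_le_mul_Vn l hi1 hin⟩
end
end
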